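/- arXiv:1912.04694 — 2 statements merged into one kernel-verified Lean document; each statement's English description precedes it below -/
import Mathlib

section
/- Let A, B ∈ F^{I₁×…×I_N} with B_(n) = A_(n) M_n for some M_n ∈ F^{I_n×I_n}, and let S ⊊ {1,…,N} be a proper subset containing n. Then there exists a matrix M_S such that the generalized mode-S matrix representations satisfy B_(S^c;S) = A_(S^c;S) M_S; moreover M_S can be taken as a Kronecker product I_K ⊗ M_n ⊗ I_L of identity matrices with M_n, where K and L are the products of the dimensions I_m for m ∈ S preceding and following n respectively (in increasing index order). -/
open Matrix
open scoped Classical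

/-- Mode-`n` matrix representation of an `N`-way tensor. -/
def unf {F : Type*} [Field F] {N : ℕ} (I : Fin N → ℕ)
    (T : (∀ m, Fin (I m)) → F) (n : Fin N) :
    Matrix ((m : {m : Fin N // m ≠ n}) → Fin (I (m : Fin N))) (Fin (I n)) F :=
  Matrix.of fun f i =>
    T (fun m => if h : m = n then Fin.cast (congrArg I h.symm) i else f ⟨m, h⟩)

/-- Generalized mode-`S` matrix representation: columns are indexed by the
multi-indices of the modes in `S`, rows by the modes in the complement. -/
def genRep {F : Type*} [Field F] {N : ℕ} (I : Fin N → ℕ)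
    (T : (∀ m, Fin (I m)) → F) (S : Finset (Fin N)) :
    Matrix ((m : {m : Fin N // m ∉ S}) → Fin (I (m : Fin N)))
      ((m : {m : Fin N // m ∈ S}) → Fin (I (m : Fin N))) F :=
  Matrix.of fun f g =>
    T (fun m => if h : m ∈ S then g ⟨m, h⟩ else f ⟨m, h⟩)

/-- If `B_(n) = A_(n) M_n` and `S ⊊ {1,…,N}` contains `n`, then
`B_(S^c;S) = A_(S^c;S) M_S` where `M_S` is the Kronecker-type matrix
`I ⊗ M_n ⊗ I` (identity on the modes of `S` other than `n`). -/
theorem stmt_16 {F : Type*} [Field F] {N : ℕ} (I : Fin N → ℕ)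
    (A B : (∀ m, Fin (I m)) → F) (n : Fin N)
    (Mn : Matrix (Fin (I n)) (Fin (I n)) F)
    (hB : unf I B n = unf I A n * Mn)
    (S : Finset (Fin N)) (hnS : n ∈ S) (hS : S ≠ Finset.univ) :
    ∃ MS : Matrix ((m : {m : Fin N // m ∈ S}) → Fin (I (m : Fin N)))
        ((m : {m : Fin N // m ∈ S}) → Fin (I (m : Fin N))) F,
      genRep I B S = genRep I A S * MS ∧
      MS = Matrix.of fun g g' =>
        if ∀ (m : Fin N) (h : m ∈ S), m ≠ n → g ⟨m, h⟩ = g' ⟨m, h⟩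
        then Mn (g ⟨n, hnS⟩) (g' ⟨n, hnS⟩) else 0 := by
    classical
  refine ⟨_, ?_, rfl⟩
  ext f g
  -- the full multi-index determined by f and g
  set idx : ∀ m, Fin (I m) := fun m => if h : m ∈ S then g ⟨m, h⟩ else f ⟨m, h⟩ with hidx
  -- restriction to modes ≠ n
  set f' : (m : {m : Fin N // m ≠ n}) → Fin (I (m : Fin N)) :=
    fun m => idx m with hf'
  have hBe := congrFun (congrFun hB f') (g ⟨n, hnS⟩)
  simp only [unf, Matrix.mul_apply, Matrix.of_apply] at hBe
  -- rewrite LHS of hBe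
  have hL : (fun m => if h : m = n then Fin.cast (congrArg I h.symm) (g ⟨n, hnS⟩)
      else f' ⟨m, h⟩) = idx := by
    funext m
    by_cases h : m = n
    · subst h
      simp [hidx, hnS]
    · simp [h, hf']
  rw [hL] at hBe
  -- now the goal
  simp only [genRep, Matrix.mul_apply, Matrix.of_apply]
  rw [hBe]
  -- reindex the sum
  have key : ∀ g' : (m : {m : Fin N // m ∈ S}) → Fin (I (m : Fin N)),
      A (fun m => if h : m ∈ S then g' ⟨m, h⟩ else f ⟨m, h⟩) *
        (if ∀ (m : Fin N) (h : m ∈ S), m ≠ n → g' ⟨m, h⟩ = g ⟨m, h⟩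
          then Mn (g' ⟨n, hnS⟩) (g ⟨n, hnS⟩) else 0) =
      if ∀ (m : Fin N) (h : m ∈ S), m ≠ n → g' ⟨m, h⟩ = g ⟨m, h⟩
        then A (fun m => if h : m ∈ S then g' ⟨m, h⟩ else f ⟨m, h⟩) *
          Mn (g' ⟨n, hnS⟩) (g ⟨n, hnS⟩) else 0 := by
    intro g'; split <;> simp
  simp only [key]
  rw [← Finset.sum_filter]
  refine Finset.sum_nbij' (i := fun j => fun m =>
      if h : (m : Fin N) = n then Fin.cast (congrArg I h.symm) j else g m)
    (j := fun g' => g' ⟨n, hnS⟩) ?_ ?_ ?_ ?_ ?_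
  · intro j _
    simp only [Finset.mem_filter, Finset.mem_univ, true_and]
    intro m hm hmn
    simp [hmn]
  · intro g' _; exact Finset.mem_univ _
  · intro j _
    simp
  · intro g' hg'
    simp only [Finset.mem_filter, Finset.mem_univ, true_and] at hg'
    funext m
    obtain ⟨m, hm⟩ := m
    by_cases h : m = n
    · subst h
      simp
    · simpa [h] using (hg' m hm h).symm
  · intro j _
    have h1 : (fun m => if h : m = n then Fin.cast (congrArg I h.symm) j else f' ⟨m, h⟩) =
        (fun m => if h : m ∈ S then
          (if h' : (m : Fin N) = n then Fin.cast (congrArg I h'.symm) j else g ⟨m, h⟩)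
          else f ⟨m, h⟩) := by
      funext m
      by_cases h : m = n
      · subst h; simp [hnS]
      · by_cases h2 : m ∈ S <;> simp [h, h2, hf', hidx]
    rw [h1]
    simp
end

section
/- Let A, B ∈ F^{I₁×…×I_N} with N ≥ 2. If col(B_(n)) ⊆ col(A_(n)) for every n ∈ {1,…,N}, then col(B_(S^c;S)) ⊆ col(A_(S^c;S)) for every nonempty proper subset S of {1,…,N}. -/
open Matrix

/-- Column space of the mode-`n` matrix representation. -/
def colSpace {F : Type*} [Field F] {N : ℕ} (I : Fin N → ℕ)
    (T : (∀ m, Fin (I m)) → F) (n : Fin N) :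
    Submodule F (((m : {m : Fin N // m ≠ n}) → Fin (I (m : Fin N))) → F) :=
  Submodule.span F (Set.range fun i : Fin (I n) => fun f => unf I T n f i)

/-- Column space of the generalized mode-`S` matrix representation. -/
def colSpaceS {F : Type*} [Field F] {N : ℕ} (I : Fin N → ℕ)
    (T : (∀ m, Fin (I m)) → F) (S : Finset (Fin N)) :
    Submodule F (((m : {m : Fin N // m ∉ S}) → Fin (I (m : Fin N))) → F) :=
  Submodule.span F
    (Set.range fun g : (m : {m : Fin N // m ∈ S}) → Fin (I (m : Fin N)) =>
      fun f => genRep I T S f g)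

/-- Key identity: evaluating the generalized representation is the same as
evaluating the mode-`n` unfolding at a suitably merged row index. -/
lemma genRep_eq_unf {F : Type*} [Field F] {N : ℕ} (I : Fin N → ℕ)
    (T : (∀ m, Fin (I m)) → F) (S : Finset (Fin N)) {n : Fin N} (hn : n ∈ S)
    (f : (m : {m : Fin N // m ∉ S}) → Fin (I (m : Fin N)))
    (g : (m : {m : Fin N // m ∈ S}) → Fin (I (m : Fin N))) :
    genRep I T S f g =
      unf I T n
        (fun m => if h : (m : Fin N) ∈ S then g ⟨m, h⟩ else f ⟨m, h⟩)
        (g ⟨n, hn⟩) := by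
  unfold genRep unf
  simp only [Matrix.of_apply]
  congr 1
  funext m
  by_cases hmn : m = n
  · subst hmn
    simp [hn]
  · simp only [dif_neg hmn]

/-- If `col(B_(n)) ⊆ col(A_(n))` for every single mode `n`, then
`col(B_(S^c;S)) ⊆ col(A_(S^c;S))` for every nonempty proper subset `S` of
the modes. -/
theorem stmt_17 {F : Type*} [Field F] {N : ℕ} (hN : 2 ≤ N) (I : Fin N → ℕ)
    (A B : (∀ m, Fin (I m)) → F)
    (h : ∀ n : Fin N, colSpace I B n ≤ colSpace I A n) :
    ∀ S : Finset (Fin N), S.Nonempty → S ≠ Finset.univ →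
      colSpaceS I B S ≤ colSpaceS I A S := by
  intro S hS _
  obtain ⟨n, hn⟩ := hS
  -- coefficients expressing columns of unf B n in terms of those of unf A n
  have hmem : ∀ i : Fin (I n),
      (fun f => unf I B n f i) ∈ colSpace I A n := by
    intro i
    exact h n (Submodule.subset_span ⟨i, rfl⟩)
  have hcoef : ∀ i : Fin (I n), ∃ c : Fin (I n) → F,
      (∑ j, c j • fun f => unf I A n f j) = fun f => unf I B n f i := by
    intro i
    exact (Submodule.mem_span_range_iff_exists_fun F).mp (hmem i)
  choose c hc using hcoef
  rw [colSpaceS, Submodule.span_le]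
  rintro x ⟨g, rfl⟩
  have key : (fun f => genRep I B S f g) =
      ∑ j : Fin (I n), c (g ⟨n, hn⟩) j •
        fun f => genRep I A S f (Function.update g ⟨n, hn⟩ j) := by
    funext f
    set f' : (m : {m : Fin N // m ≠ n}) → Fin (I (m : Fin N)) :=
      fun m => if h : (m : Fin N) ∈ S then g ⟨m, h⟩ else f ⟨m, h⟩ with hf'
    have hB := congrFun (hc (g ⟨n, hn⟩)) f'
    simp only [Finset.sum_apply, Pi.smul_apply, smul_eq_mul] at hB
    rw [genRep_eq_unf I B S hn f g, ← hB]
    rw [Finset.sum_apply]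
    refine Finset.sum_congr rfl fun j _ => ?_
    simp only [Pi.smul_apply, smul_eq_mul]
    congr 1
    rw [genRep_eq_unf I A S hn f (Function.update g ⟨n, hn⟩ j)]
    congr 1
    · funext m
      by_cases hm : (m : Fin N) ∈ S
      · simp only [dif_pos hm]
        have : (⟨(m : Fin N), hm⟩ : {m : Fin N // m ∈ S}) ≠ ⟨n, hn⟩ := by
          intro hEq
          exact m.2 (congrArg Subtype.val hEq)
        rw [Function.update_of_ne this]
        simp [f', hm]
      · simp [f', hm]
    · simp
  show (fun f => genRep I B S f g) ∈ (colSpaceS I A S : Set _)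
  rw [key]
  exact Submodule.sum_mem _ fun j _ =>
    Submodule.smul_mem _ _ (Submodule.subset_span ⟨_, rfl⟩)
end
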